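/- Let x ∈ ST_n^r be reducible (i.e. not irreducible), let y ∈ ST_m^s, and let f ∈ Sh^≺(r,s). Then f∘(x×y) is either reducible, or belongs to 𝔅(l) for some 0 ≤ l < m. -/

import Mathlib

open scoped TensorProduct

namespace SurjPerm

/-- The maximal value of a word (the `r` such that a surjection lands in `{1,…,r}`). -/
def rk (l : List ℕ) : ℕ := l.foldr max 0

/-- `l` is (the list of values of) a surjective map `{1,…,n} → {1,…,r}`
    with `n = l.length ≥ 1` and `r = rk l`. -/
def IsST (l : List ℕ) : Prop := l ≠ [] ∧ ∀ k, k ∈ l ↔ 1 ≤ k ∧ k ≤ rk l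

/-- membership in `ST_n^r`. -/
def memST (l : List ℕ) (n r : ℕ) : Prop := IsST l ∧ l.length = n ∧ rk l = r

/-- concatenation `x × y`. -/
def cat (x y : List ℕ) : List ℕ := x ++ y.map (· + rk x)

/-- iterated concatenation `x¹ × x² × … × xᵖ`. -/
def catAll (l : List (List ℕ)) : List ℕ := l.foldr cat []

/-- standardization of a word. -/
def stdList (l : List ℕ) : List ℕ := l.map fun v => (l.dedup.filter (· ≤ v)).length

/-- corestriction `x|^K`. -/
def corestrict (x : List ℕ) (K : Finset ℕ) : List ℕ := stdList (x.filter (· ∈ K))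

/-- the `i`-th entry of a word, `1`-indexed: `ent f i = f(i)`. -/
def ent (l : List ℕ) (i : ℕ) : ℕ := l.getD (i - 1) 0

/-- composition `f ∘ x` of the map (word) `f` with the map (word) `x`. -/
def wcomp (f x : List ℕ) : List ℕ := x.map fun v => ent f v

/-- the identity permutation `1_n` as a word. -/
def idW (n : ℕ) : List ℕ := (List.range n).map (· + 1)

/-- the permutation `ε(r₁,…,r_p)` as a word: the `i`-th block of positions
    carries the values shifted above all later blocks. -/
def epsW : List ℕ → List ℕ
  | [] => []
  | r :: rs => ((List.range r).map (· + rs.sum + 1)) ++ epsW rs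

/-- `x \ y := ε(r,s) ∘ (x × y)`. -/
def bsl (x y : List ℕ) : List ℕ := wcomp (epsW [rk x, rk y]) (cat x y)

/-- `f` is strictly increasing on each block of the composition `ns`. -/
def blockIncr (ns f : List ℕ) : Prop :=
  ∀ k, k < ns.length → ∀ i j, (ns.take k).sum < i → i < j → j ≤ (ns.take (k + 1)).sum →
    ent f i < ent f j

/-- `(n₁,…,n_p)`-stuffles. -/
def IsStuffle (ns f : List ℕ) : Prop := IsST f ∧ f.length = ns.sum ∧ blockIncr ns f

/-- `(n₁,…,n_p)`-shuffles: stuffles which are permutations. -/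
def IsShuffle (ns f : List ℕ) : Prop := IsStuffle ns f ∧ rk f = ns.sum

/-- irreducible surjections. -/
def Irr (l : List ℕ) : Prop := IsST l ∧ ¬ ∃ g h, IsST g ∧ IsST h ∧ l = cat g h

/-- the set of irreducible surjections of arity `n`. -/
def IrrN (n : ℕ) : Set (List ℕ) := {l | Irr l ∧ l.length = n}

/-- the product `x · y` on surjections. -/
def dotW (x y : List ℕ) : List ℕ :=
  x.map (fun v => if v < rk x then v else rk x + rk y - 1) ++
    y.map (fun v => if v < rk y then v + rk x - 1 else rk x + rk y - 1)

/-- iterated `·` product `x¹ · x² · … · xᵖ`. -/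
def dotAll : List (List ℕ) → List ℕ
  | [] => []
  | a :: as => as.foldl dotW a

/-- indecomposable surjections (for the `·` product). -/
def Indec (l : List ℕ) : Prop := IsST l ∧ ¬ ∃ a b, IsST a ∧ IsST b ∧ l = dotW a b

/-- the set `𝒟`. -/
def inD (x : List ℕ) : Prop :=
  IsST x ∧ ((x = [1] ∨ x = [1, 1]) ∨
    (3 ≤ x.length ∧ Irr x ∧
      ¬ ∃ y z, ∃ _ : y.length < x.length, inD y ∧ IsST z ∧ x = bsl y z))
termination_by x.length
decreasing_by assumption

/-- the set `𝒞`. -/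
def inC (x : List ℕ) : Prop :=
  Irr x ∧
    ((∃ y z, ∃ _ : y.length < x.length, Irr y ∧ ¬ inC y ∧ IsST z ∧ x = bsl y z) ∨
      (∃ a b, IsST a ∧ IsST b ∧ x = dotW a b))
termination_by x.length
decreasing_by assumption

/-- the set `𝔅(l)`, with `𝔅(0) = 𝒟`. -/
def inBfrak (l : ℕ) (x : List ℕ) : Prop :=
  if l = 0 then inD x else ∃ u v, inD u ∧ IsST v ∧ v.length = l ∧ x = bsl u v

/-- `t_i ∘ f`: exchange the values `i` and `i+1`. -/
def swapVal (i : ℕ) (l : List ℕ) : List ℕ :=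
  l.map fun v => if v = i then i + 1 else if v = i + 1 then i else v

/-- covering relation of the weak Bruhat order on `ST_n^r`:
    `f < t_i ∘ f` whenever `f⁻¹(i) < f⁻¹(i+1)`. -/
def wBCov (f g : List ℕ) : Prop :=
  ∃ i, 1 ≤ i ∧ i + 1 ≤ rk f ∧ g = swapVal i f ∧
    ∀ a b, a < f.length → b < f.length → f.getD a 0 = i → f.getD b 0 = i + 1 → a < b

/-- strict weak Bruhat order. -/
def wBlt : List ℕ → List ℕ → Prop := Relation.TransGen wBCov

/-- weak Bruhat order. -/
def wBle : List ℕ → List ℕ → Prop := Relation.ReflTransGen wBCov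

/-- the (0-indexed) positions `j₁-1 < … < j_λ-1` where the maximal value is attained. -/
def maxPos (x : List ℕ) : List ℕ :=
  (List.range x.length).filter fun i => x.getD i 0 = rk x

/-- `λ(x)`. -/
def lam (x : List ℕ) : ℕ := (maxPos x).length

/-- `𝕄(x) = (𝕄(x)_λ, …, 𝕄(x)₁)`. -/
def Mword (x : List ℕ) : List ℕ :=
  (List.zipWith (fun a b => b - a - 1) (maxPos x) ((maxPos x).drop 1) ++
    [x.length - (maxPos x).getLastD 0 - 1]).reverse

/-- the pieces `x|^{1..l₁}, x|^{l₁+1..l₂}, …, x|^{l_p+1..r}`. -/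
def pieces (x : List ℕ) (ls : List ℕ) : List (List ℕ) :=
  ((0 :: ls).zip (ls ++ [rk x])).map fun p => corestrict x (Finset.Icc (p.1 + 1) p.2)

/-- `x^{(l₁,…,l_p)}`. -/
def xfam (x : List ℕ) (ls : List ℕ) : List ℕ := catAll (pieces x ls)

variable (𝕂 : Type) [Field 𝕂]

/-- the vector space `𝕂[ST]` (with basis all words; only the basis elements in `ST` matter). -/
abbrev V := List ℕ →₀ 𝕂

/-- the coproduct `Δ`. -/
noncomputable def Delta : V 𝕂 →ₗ[𝕂] TensorProduct 𝕂 (V 𝕂) (V 𝕂) :=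
  Finsupp.lsum 𝕂 fun x => LinearMap.toSpanSingleton 𝕂 _
    (∑ i ∈ Finset.Ico 1 (rk x),
      Finsupp.single (corestrict x (Finset.Icc 1 i)) (1 : 𝕂) ⊗ₜ[𝕂]
        Finsupp.single (corestrict x (Finset.Icc (i + 1) (rk x))) (1 : 𝕂))

/-- the subspace `𝕂[ST_n]`. -/
noncomputable def STspanN (n : ℕ) : Submodule 𝕂 (V 𝕂) :=
  Submodule.span 𝕂 {v | ∃ l, IsST l ∧ l.length = n ∧ v = Finsupp.single l 1}

/-- `Prim(ST)_n = {v ∈ 𝕂[ST_n] : Δ v = 0}`. -/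
noncomputable def PrimN (n : ℕ) : Submodule 𝕂 (V 𝕂) :=
  STspanN 𝕂 n ⊓ LinearMap.ker (Delta 𝕂)

/-- the projection `E`. -/
noncomputable def Emap : V 𝕂 →ₗ[𝕂] V 𝕂 :=
  Finsupp.lsum 𝕂 fun x => LinearMap.toSpanSingleton 𝕂 _
    (∑ᶠ ls ∈ {ls : List ℕ | ls.Chain' (· < ·) ∧ ∀ l ∈ ls, 0 < l ∧ l < rk x},
      ((-1 : 𝕂) ^ ls.length) • Finsupp.single (xfam x ls) (1 : 𝕂))

/-- generic bilinear-on-basis operation indexed by a set of shuffles. -/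
noncomputable def shOp (P : ℕ → ℕ → List ℕ → Prop) (a b : V 𝕂) : V 𝕂 :=
  Finsupp.sum a fun x cx => Finsupp.sum b fun y cy =>
    (cx * cy) • ∑ᶠ f ∈ {f : List ℕ | IsShuffle [rk x, rk y] f ∧ P (rk x) (rk y) f},
      Finsupp.single (wcomp f (cat x y)) (1 : 𝕂)

/-- the dendriform operation `≻`. -/
noncomputable def succOp : V 𝕂 → V 𝕂 → V 𝕂 :=
  shOp 𝕂 fun r s f => ent f r < ent f (r + s)

/-- the dendriform operation `≺`. -/
noncomputable def precOp : V 𝕂 → V 𝕂 → V 𝕂 :=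
  shOp 𝕂 fun r s f => ent f (r + s) < ent f r

/-- `ω^≺(y₁,…,y_k) = y₁ ≺ (y₂ ≺ (… ≺ y_k))`. -/
noncomputable def omPrec : List (V 𝕂) → V 𝕂
  | [] => 0
  | [a] => a
  | a :: as => precOp 𝕂 a (omPrec as)

/-- `ω^≻(y₁,…,y_k) = ((y₁ ≻ y₂) ≻ …) ≻ y_k`. -/
noncomputable def omSucc : List (V 𝕂) → V 𝕂
  | [] => 0
  | a :: as => as.foldl (succOp 𝕂) a

/-- `ω^≺(l) ≻ x ≺ ω^≻(r)`, empty factors omitted. -/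
noncomputable def mterm (x : V 𝕂) : List (V 𝕂) → List (V 𝕂) → V 𝕂
  | [], [] => x
  | [], r => precOp 𝕂 x (omSucc 𝕂 r)
  | l, [] => succOp 𝕂 (omPrec 𝕂 l) x
  | l, r => precOp 𝕂 (succOp 𝕂 (omPrec 𝕂 l) x) (omSucc 𝕂 r)

/-- the brace operation `M^{ST}_{1k}(x; y₁,…,y_k)`. -/
noncomputable def braceM (x : V 𝕂) (ys : List (V 𝕂)) : V 𝕂 :=
  ∑ j ∈ Finset.range (ys.length + 1),
    ((-1 : 𝕂) ^ (ys.length - j)) • mterm 𝕂 x (ys.take j) (ys.drop j)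

/-- generic bilinear-on-basis operation indexed by a set of stuffles, with `q`-weights
    `q^{s(f) - c}` where `s(f) = |f| - rk f`. -/
noncomputable def stOp (q : 𝕂) (c : ℕ) (P : ℕ → ℕ → List ℕ → Prop) (a b : V 𝕂) : V 𝕂 :=
  Finsupp.sum a fun x cx => Finsupp.sum b fun y cy =>
    (cx * cy) • ∑ᶠ f ∈ {f : List ℕ | IsStuffle [rk x, rk y] f ∧ P (rk x) (rk y) f},
      q ^ (f.length - rk f - c) • Finsupp.single (wcomp f (cat x y)) (1 : 𝕂)

/-- `≻_q`. -/
noncomputable def succQ (q : 𝕂) : V 𝕂 → V 𝕂 → V 𝕂 :=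
  stOp 𝕂 q 0 fun r s f => ent f r < ent f (r + s)

/-- `≺_q`. -/
noncomputable def precQ (q : 𝕂) : V 𝕂 → V 𝕂 → V 𝕂 :=
  stOp 𝕂 q 0 fun r s f => ent f (r + s) < ent f r

/-- `·_q`. -/
noncomputable def dotQ (q : 𝕂) : V 𝕂 → V 𝕂 → V 𝕂 :=
  stOp 𝕂 q 1 fun r s f => ent f r = ent f (r + s)

/-- `≽_q = ≻_q + q ·_q`. -/
noncomputable def succcQ (q : 𝕂) (a b : V 𝕂) : V 𝕂 := succQ 𝕂 q a b + q • dotQ 𝕂 q a b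

/-- `ω^{≺_q}`. -/
noncomputable def omPrecQ (q : 𝕂) : List (V 𝕂) → V 𝕂
  | [] => 0
  | [a] => a
  | a :: as => precQ 𝕂 q a (omPrecQ q as)

/-- `ω^{≽_q}`. -/
noncomputable def omSucccQ (q : 𝕂) : List (V 𝕂) → V 𝕂
  | [] => 0
  | a :: as => as.foldl (succcQ 𝕂 q) a

/-- `ω^{≺_q}(l) ≽_q x ≺_q ω^{≽_q}(r)`, empty factors omitted. -/
noncomputable def mtermQ (q : 𝕂) (x : V 𝕂) : List (V 𝕂) → List (V 𝕂) → V 𝕂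
  | [], [] => x
  | [], r => precQ 𝕂 q x (omSucccQ 𝕂 q r)
  | l, [] => succcQ 𝕂 q (omPrecQ 𝕂 q l) x
  | l, r => precQ 𝕂 q (succcQ 𝕂 q (omPrecQ 𝕂 q l) x) (omSucccQ 𝕂 q r)

/-- the brace operation `M^{ST(q)}_{1k}`. -/
noncomputable def braceMQ (q : 𝕂) (x : V 𝕂) (ys : List (V 𝕂)) : V 𝕂 :=
  ∑ j ∈ Finset.range (ys.length + 1),
    ((-1 : 𝕂) ^ (ys.length - j)) • mtermQ 𝕂 q x (ys.take j) (ys.drop j)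

/-- the shuffle product of two basis elements. -/
noncomputable def shufSingle (x y : List ℕ) : V 𝕂 :=
  ∑ᶠ f ∈ {f : List ℕ | IsShuffle [rk x, rk y] f},
    Finsupp.single (wcomp f (cat x y)) (1 : 𝕂)

/-- the shuffle product `*` on `𝕂[ST]`, as a bilinear map. -/
noncomputable def shufL : V 𝕂 →ₗ[𝕂] V 𝕂 →ₗ[𝕂] V 𝕂 :=
  Finsupp.lsum 𝕂 fun x => LinearMap.toSpanSingleton 𝕂 _
    (Finsupp.lsum 𝕂 fun y => LinearMap.toSpanSingleton 𝕂 _ (shufSingle 𝕂 x y))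

/-- the augmented space `𝕂·1 ⊕ 𝕂[ST]`. -/
abbrev Vp := 𝕂 × V 𝕂

/-- inclusion `𝕂[ST] ↪ 𝕂·1 ⊕ 𝕂[ST]`. -/
noncomputable def inclV : V 𝕂 →ₗ[𝕂] Vp 𝕂 := LinearMap.inr 𝕂 𝕂 (V 𝕂)

/-- the unit `1`. -/
noncomputable def oneVp : Vp 𝕂 := (1, 0)

/-- the unital extension of the shuffle product to `𝕂·1 ⊕ 𝕂[ST]`, as a bilinear map:
    `(a + x)(b + y) = ab + (a y + b x + x * y)`.  In particular `1 * u = u = u * 1`. -/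
noncomputable def mulVp : Vp 𝕂 →ₗ[𝕂] Vp 𝕂 →ₗ[𝕂] Vp 𝕂 :=
  LinearMap.mk₂ 𝕂 (fun u v => (u.1 * v.1, u.1 • v.2 + v.1 • u.2 + shufL 𝕂 u.2 v.2))
    (fun u u' v => by
      refine Prod.ext ?_ ?_ <;>
        simp [add_mul, add_smul, smul_add, map_add, LinearMap.add_apply] <;> abel)
    (fun c u v => by
      refine Prod.ext ?_ ?_ <;>
        simp [mul_assoc, mul_smul, smul_add, smul_comm c v.1] <;> abel)
    (fun u v v' => by
      refine Prod.ext ?_ ?_ <;>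
        simp [mul_add, add_smul, smul_add, map_add, LinearMap.add_apply] <;> abel)
    (fun c u v => by
      refine Prod.ext ?_ ?_ <;>
        simp [mul_left_comm, mul_smul, smul_add, smul_comm c u.1] <;> abel)

/-- the extension `Δ⁺` of `Δ` to `𝕂·1 ⊕ 𝕂[ST]`, with `Δ⁺(1) = 1 ⊗ 1` and
    `Δ⁺(x) = x ⊗ 1 + 1 ⊗ x + Δ(x)` for `x ∈ 𝕂[ST]`. -/
noncomputable def DeltaP : Vp 𝕂 →ₗ[𝕂] TensorProduct 𝕂 (Vp 𝕂) (Vp 𝕂) :=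
  (LinearMap.toSpanSingleton 𝕂 _ (oneVp 𝕂 ⊗ₜ[𝕂] oneVp 𝕂)).comp (LinearMap.fst 𝕂 𝕂 (V 𝕂))
    + (((TensorProduct.mk 𝕂 (Vp 𝕂) (Vp 𝕂)).flip (oneVp 𝕂)).comp (inclV 𝕂)).comp
        (LinearMap.snd 𝕂 𝕂 (V 𝕂))
    + ((TensorProduct.mk 𝕂 (Vp 𝕂) (Vp 𝕂) (oneVp 𝕂)).comp (inclV 𝕂)).comp
        (LinearMap.snd 𝕂 𝕂 (V 𝕂))
    + ((TensorProduct.map (inclV 𝕂) (inclV 𝕂)).comp (Delta 𝕂)).comp (LinearMap.snd 𝕂 𝕂 (V 𝕂))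

/-- componentwise product on the tensor square: `(a⊗b)·(c⊗d) = (a·c)⊗(b·d)`. -/
noncomputable def mulTsq :
    TensorProduct 𝕂 (Vp 𝕂) (Vp 𝕂) →ₗ[𝕂]
      TensorProduct 𝕂 (Vp 𝕂) (Vp 𝕂) →ₗ[𝕂] TensorProduct 𝕂 (Vp 𝕂) (Vp 𝕂) :=
  TensorProduct.lift
    (((TensorProduct.mapBilinear (RingHom.id 𝕂) (Vp 𝕂) (Vp 𝕂) (Vp 𝕂) (Vp 𝕂)).comp (mulVp 𝕂)).compl₂
      (mulVp 𝕂))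

/-- concatenation on the right with a fixed word, linearized: `x ↦ x × y`. -/
noncomputable def catR (y : List ℕ) : V 𝕂 →ₗ[𝕂] V 𝕂 :=
  Finsupp.lsum 𝕂 fun x => LinearMap.toSpanSingleton 𝕂 _ (Finsupp.single (cat x y) (1 : 𝕂))

/-- concatenation on the left with a fixed word, linearized: `y ↦ x × y`. -/
noncomputable def catL (x : List ℕ) : V 𝕂 →ₗ[𝕂] V 𝕂 :=
  Finsupp.lsum 𝕂 fun y => LinearMap.toSpanSingleton 𝕂 _ (Finsupp.single (cat x y) (1 : 𝕂))

/-- `Sh^•(r₁,…,r_p)`: surjections onto `{1,…,R-p+1}` (where `R = r₁+…+r_p`), strictly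
    increasing on each block, attaining the maximal value exactly at the block ends, and whose
    corestriction to `{1,…,R-p}` is a `(r₁-1,…,r_p-1)`-shuffle. -/
def ShBull (rs : List ℕ) (f : List ℕ) : Prop :=
  memST f rs.sum (rs.sum - rs.length + 1) ∧ blockIncr rs f ∧
    (∀ i, 1 ≤ i → i ≤ rs.sum →
      (ent f i = rs.sum - rs.length + 1 ↔ ∃ k, k < rs.length ∧ i = (rs.take (k + 1)).sum)) ∧
    IsShuffle (rs.map (· - 1)) (corestrict f (Finset.Icc 1 (rs.sum - rs.length)))

/-!
If `w = f ∘ (x × y)` is irreducible, then `w ∈ 𝒟` or `w = u \ v` with `u ∈ 𝒟`. Suppose `|v| ≥ |y|`.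
Then every letter of `y` lands in `v`, i.e. `f` maps the second block into `{1,…,rk v}`; as `f` is
increasing on the first block, it maps `{1,…,a}` into `{1,…,rk v}` and shifts `{a+1,…,r}` by `s`,
where `a = rk v - s`. Reading `w = u \ v` back through `f` gives `x = u` or `x = u \ z`. Both are
impossible for the reducible `x = g × h`: elements of `𝒟` are irreducible or of rank one, and in
`g × h` every letter `1` precedes every top letter, while in `p \ q` it is the other way round.
-/

lemma rk_le_iff {l : List ℕ} {c : ℕ} : rk l ≤ c ↔ ∀ k ∈ l, k ≤ c := by
  induction l with
  | nil => simp [rk]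
  | cons a t ih => simp [rk, ← ih]

lemma le_rk_of_mem {l : List ℕ} {k : ℕ} (h : k ∈ l) : k ≤ rk l :=
  rk_le_iff.1 le_rfl k h

lemma ent_le_rk (f : List ℕ) (i : ℕ) : ent f i ≤ rk f := by
  rcases lt_or_ge (i - 1) f.length with h | h
  · rw [ent, List.getD_eq_getElem _ _ h]
    exact le_rk_of_mem (List.getElem_mem h)
  · rw [ent, List.getD_eq_default _ _ h]
    exact Nat.zero_le _

lemma ent_mem {f : List ℕ} {i : ℕ} (h1 : 1 ≤ i) (h2 : i ≤ f.length) : ent f i ∈ f := by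
  rw [ent, List.getD_eq_getElem _ _ (by omega)]
  exact List.getElem_mem _

lemma exists_ent_eq_of_mem {f : List ℕ} {k : ℕ} (h : k ∈ f) :
    ∃ i, 1 ≤ i ∧ i ≤ f.length ∧ ent f i = k := by
  obtain ⟨j, hj, rfl⟩ := List.mem_iff_getElem.1 h
  exact ⟨j + 1, by omega, by omega, by rw [ent, Nat.add_sub_cancel, List.getD_eq_getElem _ _ hj]⟩

lemma rk_eq_of_mem_iff {l : List ℕ} {R : ℕ} (h0 : l ≠ []) (h : ∀ k, k ∈ l ↔ 1 ≤ k ∧ k ≤ R) :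
    rk l = R := by
  obtain ⟨k, hk⟩ := List.exists_mem_of_ne_nil l h0
  have hR : R ∈ l := (h R).2 ⟨by have := (h k).1 hk; omega, le_rfl⟩
  exact le_antisymm (rk_le_iff.2 fun k hk => ((h k).1 hk).2) (le_rk_of_mem hR)

lemma IsST.of_mem_iff {l : List ℕ} {R : ℕ} (h0 : l ≠ []) (h : ∀ k, k ∈ l ↔ 1 ≤ k ∧ k ≤ R) :
    IsST l :=
  ⟨h0, by rwa [rk_eq_of_mem_iff h0 h]⟩

lemma IsST.one_le_of_mem {l : List ℕ} {k : ℕ} (hl : IsST l) (hk : k ∈ l) : 1 ≤ k :=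
  ((hl.2 k).1 hk).1

lemma IsST.one_le_rk {l : List ℕ} (hl : IsST l) : 1 ≤ rk l := by
  obtain ⟨k, hk⟩ := List.exists_mem_of_ne_nil l hl.1
  exact (hl.one_le_of_mem hk).trans (le_rk_of_mem hk)

lemma IsST.mem_of_le {l : List ℕ} {k : ℕ} (hl : IsST l) (h1 : 1 ≤ k) (h2 : k ≤ rk l) : k ∈ l :=
  (hl.2 k).2 ⟨h1, h2⟩

lemma mem_cat_iff {x y : List ℕ} (hx : IsST x) (hy : IsST y) (k : ℕ) :
    k ∈ cat x y ↔ 1 ≤ k ∧ k ≤ rk x + rk y := by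
  simp only [cat, List.mem_append, List.mem_map]
  constructor
  · rintro (hk | ⟨k', hk', rfl⟩)
    · have := (hx.2 k).1 hk
      omega
    · have := (hy.2 k').1 hk'
      omega
  · rintro ⟨h1, h2⟩
    by_cases hk : k ≤ rk x
    · exact Or.inl (hx.mem_of_le h1 hk)
    · exact Or.inr ⟨k - rk x, hy.mem_of_le (by omega) (by omega), by omega⟩

lemma cat_ne_nil {x : List ℕ} (y : List ℕ) (hx : IsST x) : cat x y ≠ [] := by
  simp [cat, hx.1]

lemma rk_cat {x y : List ℕ} (hx : IsST x) (hy : IsST y) : rk (cat x y) = rk x + rk y :=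
  rk_eq_of_mem_iff (cat_ne_nil y hx) (mem_cat_iff hx hy)

lemma isST_cat {x y : List ℕ} (hx : IsST x) (hy : IsST y) : IsST (cat x y) :=
  IsST.of_mem_iff (cat_ne_nil y hx) (mem_cat_iff hx hy)

lemma isST_wcomp {f z : List ℕ} (hf : IsST f) (hz : IsST z) (hlen : rk z = f.length) :
    IsST (wcomp f z) := by
  refine IsST.of_mem_iff (R := rk f) (by simpa [SurjPerm.wcomp] using hz.1) fun k => ?_
  simp only [SurjPerm.wcomp, List.mem_map]
  constructor
  · rintro ⟨i, hi, rfl⟩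
    have := (hz.2 i).1 hi
    exact (hf.2 _).1 (ent_mem this.1 (by omega))
  · rintro ⟨h1, h2⟩
    obtain ⟨i, hi1, hi2, rfl⟩ := exists_ent_eq_of_mem (hf.mem_of_le h1 h2)
    exact ⟨i, hz.mem_of_le hi1 (by omega), rfl⟩

lemma ent_epsW_pair_of_le {a b v : ℕ} (h1 : 1 ≤ v) (h2 : v ≤ a) :
    ent (epsW [a, b]) v = v + b := by
  have hv : v - 1 < ((List.range a).map (· + b + 1)).length := by simp; omega
  simp only [ent, epsW, List.sum_cons, List.sum_nil, add_zero, List.append_nil]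
  rw [List.getD_append _ _ _ _ hv, List.getD_eq_getElem _ _ hv]
  simp
  omega

lemma ent_epsW_pair_of_lt {a b v : ℕ} (h1 : a < v) (h2 : v ≤ a + b) :
    ent (epsW [a, b]) v = v - a := by
  have hv : ((List.range a).map (· + b + 1)).length ≤ v - 1 := by simp; omega
  simp only [ent, epsW, List.sum_cons, List.sum_nil, add_zero, List.append_nil]
  rw [List.getD_append_right _ _ _ _ hv, List.getD_eq_getElem _ _ (by simp; omega)]
  simp
  omega

lemma bsl_eq_append {u v : List ℕ} (hu : IsST u) (hv : IsST v) :
    bsl u v = u.map (· + rk v) ++ v := by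
  rw [bsl, SurjPerm.wcomp, cat, List.map_append, List.map_map]
  congr 1
  · refine List.map_congr_left fun k hk => ?_
    have := (hu.2 k).1 hk
    exact ent_epsW_pair_of_le this.1 this.2
  · conv_rhs => rw [← List.map_id v]
    refine List.map_congr_left fun k hk => ?_
    have := (hv.2 k).1 hk
    simp only [Function.comp_apply, id]
    rw [ent_epsW_pair_of_lt (by omega) (by omega)]
    simp

lemma cat_ne_bsl {g h p q : List ℕ} (hg : IsST g) (hh : IsST h) (hp : IsST p) (hq : IsST q) :
    cat g h ≠ bsl p q := by
  rw [bsl_eq_append hp hq, cat]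
  intro he
  rcases List.append_eq_append_iff.1 he with ⟨a, hpa, -⟩ | ⟨c, hgc, hqc⟩
  · have h1 : 1 ∈ p.map (· + rk q) :=
      hpa ▸ List.mem_append_left a (hg.mem_of_le le_rfl hg.one_le_rk)
    obtain ⟨k, hk, hk1⟩ := List.mem_map.1 h1
    have := hp.one_le_of_mem hk
    have := hq.one_le_rk
    omega
  · have hg' : rk p + rk q ≤ rk g := le_rk_of_mem (hgc ▸ List.mem_append_left c
      (List.mem_map_of_mem (f := (· + rk q)) (hp.mem_of_le hp.one_le_rk le_rfl)))
    have hq' : rk h + rk g ≤ rk q := le_rk_of_mem (hqc ▸ List.mem_append_right c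
      (List.mem_map_of_mem (f := (· + rk g)) (hh.mem_of_le hh.one_le_rk le_rfl)))
    have := hp.one_le_rk
    have := hh.one_le_rk
    omega

lemma IsST.eq_of_length_le_two {w : List ℕ} (hw : IsST w) (hlen : w.length ≤ 2) :
    w = [1] ∨ w = [1, 1] ∨ w = [1, 2] ∨ w = [2, 1] := by
  obtain ⟨hne, hmem⟩ := hw
  rcases w with _ | ⟨a, _ | ⟨b, _ | ⟨c, w⟩⟩⟩
  · exact absurd rfl hne
  · have h1 := hmem 1
    have ha := hmem a
    simp [rk] at h1 ha
    simp
    omega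
  · have h1 := hmem 1
    have h2 := hmem 2
    have ha := hmem a
    have hb := hmem b
    simp [rk] at h1 h2 ha hb
    simp
    omega
  · simp at hlen

lemma isST_one : IsST [1] :=
  IsST.of_mem_iff (R := 1) (by simp) fun k => by simp; omega

lemma isST_one_one : IsST [1, 1] :=
  IsST.of_mem_iff (R := 1) (by simp) fun k => by simp; omega

lemma inD.isST {u : List ℕ} (hu : inD u) : IsST u := by
  rw [inD] at hu
  exact hu.1

lemma inD_one : inD [1] := by
  rw [inD]
  exact ⟨isST_one, Or.inl (Or.inl rfl)⟩

lemma inD_one_one : inD [1, 1] := by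
  rw [inD]
  exact ⟨isST_one_one, Or.inl (Or.inr rfl)⟩

lemma ne_cat_of_inD {u g h : List ℕ} (hu : inD u) (hg : IsST g) (hh : IsST h) : u ≠ cat g h := by
  rintro rfl
  rw [inD] at hu
  have hrk := rk_cat hg hh
  have := hg.one_le_rk
  have := hh.one_le_rk
  rcases hu.2 with (h1 | h1) | ⟨-, hirr, -⟩
  · rw [h1, show rk [1] = 1 from rfl] at hrk
    omega
  · rw [h1, show rk [1, 1] = 1 from rfl] at hrk
    omega
  · exact hirr.2 ⟨g, h, hg, hh, rfl⟩

/-- An irreducible surjection outside `𝒟` is `u \ v` for some `u ∈ 𝒟`: for arity at least three this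
is the definition of `𝒟`, and below that `(2,1) = (1) \ (1)` is the only case. -/
lemma Irr.inD_or_eq_bsl {w : List ℕ} (hw : Irr w) :
    inD w ∨ ∃ u v, inD u ∧ IsST v ∧ w = bsl u v := by
  rcases Nat.lt_or_ge w.length 3 with hlen | hlen
  · rcases hw.1.eq_of_length_le_two (by omega) with rfl | rfl | rfl | rfl
    · exact Or.inl inD_one
    · exact Or.inl inD_one_one
    · exact absurd ⟨[1], [1], isST_one, isST_one, by decide⟩ hw.2
    · exact Or.inr ⟨[1], [1], inD_one, isST_one, by decide⟩
  · by_contra! h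
    apply h.1
    rw [inD]
    refine ⟨hw.1, Or.inr ⟨hlen, hw, ?_⟩⟩
    rintro ⟨u, v, -, hu, hv, rfl⟩
    exact h.2 u v hu hv rfl

section Shuffle

variable {r s : ℕ} {f : List ℕ}

lemma IsShuffle.exists_ent_eq (hf : IsShuffle [r, s] f) {k : ℕ} (h1 : 1 ≤ k) (h2 : k ≤ r + s) :
    ∃ i, 1 ≤ i ∧ i ≤ r + s ∧ ent f i = k := by
  have hrk : rk f = r + s := by simpa using hf.2
  have hlen : f.length = r + s := by simpa using hf.1.2.1
  rw [← hlen]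
  exact exists_ent_eq_of_mem (hf.1.1.mem_of_le h1 (hrk ▸ h2))

lemma IsShuffle.ent_le (hf : IsShuffle [r, s] f) (i : ℕ) : ent f i ≤ r + s := by
  simpa using (ent_le_rk f i).trans_eq hf.2

lemma IsShuffle.ent_lt_ent (hf : IsShuffle [r, s] f) {i j : ℕ} (hi : 1 ≤ i) (hij : i < j)
    (hj : j ≤ r) : ent f i < ent f j :=
  hf.1.2.2 0 (by simp) i j (by simpa) hij (by simpa)

lemma IsShuffle.ent_add_le (hf : IsShuffle [r, s] f) {i : ℕ} (hi : 1 ≤ i) :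
    ∀ t, i + t ≤ r → ent f i + t ≤ ent f (i + t)
  | 0, _ => le_rfl
  | t + 1, h => by
    have := hf.ent_add_le hi t (by omega)
    have := hf.ent_lt_ent (i := i + t) (j := i + t + 1) (by omega) (by omega) (by omega)
    show ent f i + (t + 1) ≤ ent f (i + t + 1)
    omega

/-- Counting the preimages of `{1,…,c}` and of `{c+1,…,r+s}` pins down the point `a` where the
increasing first block crosses `c`. -/
lemma IsShuffle.exists_split (hf : IsShuffle [r, s] f) {c : ℕ} (hcr : c ≤ r + s)
    (hc : ∀ t, 1 ≤ t → t ≤ s → ent f (r + t) ≤ c) :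
    ∃ a, c = a + s ∧ (∀ i, 1 ≤ i → i ≤ r → (ent f i ≤ c ↔ i ≤ a)) ∧
      ∀ i, a < i → i ≤ r → ent f i = i + s := by
  set a := Nat.findGreatest (fun i => ent f i ≤ c) r
  have har : a ≤ r := Nat.findGreatest_le r
  have hsplit : ∀ i, 1 ≤ i → i ≤ r → (ent f i ≤ c ↔ i ≤ a) := by
    refine fun i h1 h2 => ⟨fun h => Nat.le_findGreatest h2 h, fun hia => ?_⟩
    have hfa : ent f a ≤ c := Nat.findGreatest_of_ne_zero (P := fun i => ent f i ≤ c) rfl (by omega)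
    rcases hia.eq_or_lt with rfl | hlt
    · exact hfa
    · exact (hf.ent_lt_ent h1 hlt har).le.trans hfa
  have hle : c ≤ a + s := by
    have hsurj : Set.SurjOn (ent f) ↑(Finset.Icc 1 a ∪ Finset.Icc (r + 1) (r + s))
        ↑(Finset.Icc 1 c) := by
      intro k hk
      simp only [Finset.coe_Icc, Set.mem_Icc] at hk
      obtain ⟨i, hi1, hi2, rfl⟩ := hf.exists_ent_eq hk.1 (by omega)
      refine ⟨i, ?_, rfl⟩
      simp only [Finset.coe_union, Finset.coe_Icc, Set.mem_union, Set.mem_Icc]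
      by_cases hir : i ≤ r
      · exact Or.inl ⟨hi1, (hsplit i hi1 hir).1 hk.2⟩
      · exact Or.inr ⟨by omega, hi2⟩
    have := (Finset.card_le_card_of_surjOn _ hsurj).trans (Finset.card_union_le _ _)
    simpa using this
  have hge : a + s ≤ c := by
    have hsurj : Set.SurjOn (ent f) ↑(Finset.Icc (a + 1) r) ↑(Finset.Icc (c + 1) (r + s)) := by
      intro k hk
      simp only [Finset.coe_Icc, Set.mem_Icc] at hk
      obtain ⟨i, hi1, hi2, rfl⟩ := hf.exists_ent_eq (by omega) hk.2
      have hir : i ≤ r := by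
        by_contra hir
        have := hc (i - r) (by omega) (by omega)
        rw [Nat.add_sub_cancel' (by omega)] at this
        omega
      have := hsplit i hi1 hir
      exact ⟨i, by simp only [Finset.coe_Icc, Set.mem_Icc]; omega, rfl⟩
    have := Finset.card_le_card_of_surjOn _ hsurj
    simp only [Nat.card_Icc] at this
    omega
  refine ⟨a, by omega, hsplit, fun i hai hir => ?_⟩
  have hfirst := hsplit (a + 1) (by omega) (by omega)
  have hlow := hf.ent_add_le (i := a + 1) (by omega) (i - (a + 1)) (by omega)
  have hhigh := hf.ent_add_le (i := i) (by omega) (r - i) (by omega)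
  rw [Nat.add_sub_cancel' hai] at hlow
  rw [Nat.add_sub_cancel' hir] at hhigh
  have := hf.ent_le r
  omega

end Shuffle

lemma eq_or_eq_bsl_of_eq_map_add_append {x u z : List ℕ} {a : ℕ} (hx : IsST x) (hu : IsST u)
    (hxz : x = u.map (· + a) ++ z) (hz : ∀ k ∈ z, k ≤ a) :
    x = u ∨ ∃ z, IsST z ∧ x = bsl u z := by
  have hxu : ∀ k ∈ u, k + a ∈ x := fun k hk => hxz ▸ List.mem_append_left z (List.mem_map_of_mem hk)
  by_cases hz0 : z = []
  · subst hz0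
    have h1 : 1 ∈ u.map (· + a) := by simpa [hxz] using hx.mem_of_le le_rfl hx.one_le_rk
    obtain ⟨k, hk, hka⟩ := List.mem_map.1 h1
    have ha : a = 0 := by
      have := hu.one_le_of_mem hk
      omega
    left
    simpa [ha] using hxz
  · have hmem : ∀ k, k ∈ z ↔ 1 ≤ k ∧ k ≤ a := by
      refine fun k => ⟨fun hk => ⟨hx.one_le_of_mem (hxz ▸ List.mem_append_right _ hk), hz k hk⟩,
        fun ⟨h1, h2⟩ => ?_⟩
      obtain ⟨k₀, hk₀⟩ := List.exists_mem_of_ne_nil u hu.1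
      have := hu.one_le_of_mem hk₀
      have := le_rk_of_mem (hxu k₀ hk₀)
      have hkx : k ∈ x := hx.mem_of_le h1 (by omega)
      rw [hxz, List.mem_append, List.mem_map] at hkx
      rcases hkx with ⟨k', hk', rfl⟩ | hk
      · have := hu.one_le_of_mem hk'
        omega
      · exact hk
    refine Or.inr ⟨z, IsST.of_mem_iff hz0 hmem, ?_⟩
    rw [bsl_eq_append hu (IsST.of_mem_iff hz0 hmem), rk_eq_of_mem_iff hz0 hmem]
    exact hxz

lemma eq_or_eq_bsl_of_wcomp_cat_eq_bsl {x y f u v : List ℕ} (hx : IsST x) (hy : IsST y)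
    (hf : IsShuffle [rk x, rk y] f) (hu : IsST u) (hv : IsST v) (hlen : y.length ≤ v.length)
    (heq : wcomp f (cat x y) = bsl u v) :
    x = u ∨ ∃ z, IsST z ∧ x = bsl u z := by
  set r := rk x
  set s := rk y
  set c := rk v
  set p := u.length
  have heq' : x.map (ent f) ++ y.map (fun t => ent f (t + r)) = u.map (· + c) ++ v := by
    rw [← bsl_eq_append hu hv, ← heq, wcomp, cat, List.map_append, List.map_map]
    rfl
  have hpx : p ≤ x.length := by
    have := congrArg List.length heq'
    simp only [List.length_append, List.length_map] at this
    omega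
  obtain ⟨hU, hV⟩ : (x.take p).map (ent f) = u.map (· + c) ∧
      (x.drop p).map (ent f) ++ y.map (fun t => ent f (t + r)) = v := by
    rw [← List.take_append_drop p x, List.map_append, List.append_assoc] at heq'
    exact List.append_inj heq' (by simp; omega)
  have hcr : c ≤ r + s := by
    refine rk_le_iff.2 fun k hk => ?_
    rw [← hV, List.mem_append, List.mem_map, List.mem_map] at hk
    rcases hk with ⟨i, -, rfl⟩ | ⟨t, -, rfl⟩ <;> exact hf.ent_le _
  have hc : ∀ t, 1 ≤ t → t ≤ s → ent f (r + t) ≤ c := fun t h1 h2 =>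
    le_rk_of_mem (hV ▸ List.mem_append_right _
      (List.mem_map.2 ⟨t, hy.mem_of_le h1 h2, by rw [add_comm]⟩))
  obtain ⟨a, hca, hsplit, hshift⟩ := hf.exists_split hcr hc
  have htake : x.take p = u.map (· + a) := by
    have hmap : (x.take p).map (ent f) = (x.take p).map (· + s) := by
      refine List.map_congr_left fun k hk => ?_
      have hkx := (hx.2 k).1 (List.mem_of_mem_take hk)
      obtain ⟨k', hk', he⟩ := List.mem_map.1 (hU ▸ List.mem_map_of_mem hk)
      have := hu.one_le_of_mem hk'
      have := hsplit k hkx.1 hkx.2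
      exact hshift k (by omega) hkx.2
    apply List.map_injective_iff.2 (add_left_injective s)
    rw [← hmap, hU, List.map_map]
    refine List.map_congr_left fun k _ => ?_
    simp only [Function.comp_apply]
    omega
  have hdrop : ∀ k ∈ x.drop p, k ≤ a := fun k hk => by
    have hkx := (hx.2 k).1 (List.mem_of_mem_drop hk)
    exact (hsplit k hkx.1 hkx.2).1
      (le_rk_of_mem (hV ▸ List.mem_append_left _ (List.mem_map_of_mem hk)))
  exact eq_or_eq_bsl_of_eq_map_add_append hx hu (by rw [← htake, List.take_append_drop]) hdrop

theorem statement_16_general (x y f : List ℕ) (n r m s : ℕ)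
    (hx : memST x n r) (hxred : ¬ Irr x) (hy : memST y m s)
    (hf : IsShuffle [r, s] f) :
    (IsST (wcomp f (cat x y)) ∧ ¬ Irr (wcomp f (cat x y))) ∨
      ∃ l, l < m ∧ inBfrak l (wcomp f (cat x y)) := by
  obtain ⟨hxst, rfl, rfl⟩ := hx
  obtain ⟨hyst, rfl, rfl⟩ := hy
  by_cases hirr : Irr (wcomp f (cat x y))
  swap
  · refine Or.inl ⟨isST_wcomp hf.1.1 (isST_cat hxst hyst) ?_, hirr⟩
    simpa [rk_cat hxst hyst] using hf.1.2.1.symm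
  right
  rcases hirr.inD_or_eq_bsl with hD | ⟨u, v, hu, hv, heq⟩
  · exact ⟨0, List.length_pos_iff.2 hyst.1, by simpa [inBfrak] using hD⟩
  obtain ⟨g, h, hg, hh, hxgh⟩ : ∃ g h, IsST g ∧ IsST h ∧ x = cat g h := by
    by_contra hcon
    exact hxred ⟨hxst, hcon⟩
  have hv0 : 0 < v.length := List.length_pos_iff.2 hv.1
  refine ⟨v.length, ?_, by rw [inBfrak, if_neg hv0.ne']; exact ⟨u, v, hu, hv, rfl, heq⟩⟩
  by_contra! hlen
  rcases eq_or_eq_bsl_of_wcomp_cat_eq_bsl hxst hyst hf hu.isST hv hlen heq with hxu | ⟨z, hz, hxz⟩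
  · exact ne_cat_of_inD hu hg hh (hxu ▸ hxgh)
  · exact cat_ne_bsl hg hh hu.isST hz (hxgh ▸ hxz)

/-- if `x` is reducible and `f ∈ Sh^≺(r,s)`, then `f∘(x×y)` is either reducible
or belongs to `𝔅(l)` for some `0 ≤ l < m`. -/
theorem statement_16 (x y f : List ℕ) (n r m s : ℕ)
    (hx : memST x n r) (hxred : ¬ Irr x) (hy : memST y m s)
    (hf : IsShuffle [r, s] f) (hfp : ent f (r + s) < ent f r) :
    (IsST (wcomp f (cat x y)) ∧ ¬ Irr (wcomp f (cat x y))) ∨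
      ∃ l, l < m ∧ inBfrak l (wcomp f (cat x y)) :=
  statement_16_general x y f n r m s hx hxred hy hf

end SurjPerm
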